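/- arXiv:2307.06612 — 4 statements merged into one kernel-verified Lean document; each statement's English description precedes it below -/
import Mathlib

section
/- Let p be an odd prime and let Λ be the fractional ideal of ℚ(ζ_p) generated by (1−ζ_p)^{−(p−3)/2}. Then the lattice (Λ, Tr) with bilinear form (x,y) ↦ Tr_{ℚ(ζ_p)/ℚ}(x·ȳ) is a root lattice of type A_{p−1}, i.e., Λ has a ℤ-basis (e_1,…,e_{p−1}) with ⟨e_i,e_i⟩ = 2, ⟨e_i,e_j⟩ = −1 if |i−j| = 1, and 0 otherwise. -/
open NumberField
open scoped nonZeroDivisors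

section AuxForStmt6
open Polynomial

lemma trace_primRoot (p : ℕ+) (hp : (p : ℕ).Prime) {K : Type*} [Field K] [NumberField K]
    [IsCyclotomicExtension {(p : ℕ)} ℚ K] {η : K} (hη : IsPrimitiveRoot η p) :
    Algebra.trace ℚ K η = -1 := by
  haveI : Fact (p : ℕ).Prime := ⟨hp⟩
  have h1 := (hη.powerBasis ℚ).trace_gen_eq_nextCoeff_minpoly
  rw [IsPrimitiveRoot.powerBasis_gen] at h1
  rw [h1, ← cyclotomic_eq_minpoly_rat hη p.pos]
  have hd : (cyclotomic (p : ℕ) ℚ).natDegree = (p : ℕ) - 1 := by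
    rw [natDegree_cyclotomic, Nat.totient_prime hp]
  have hp2 := hp.two_le
  rw [nextCoeff_of_natDegree_pos (by omega), hd, cyclotomic_prime]
  have h2 : ((p : ℕ) - 1 - 1) = (p : ℕ) - 2 := by omega
  rw [h2, finset_sum_coeff]
  simp only [coeff_X_pow]
  rw [Finset.sum_ite_eq (Finset.range (p : ℕ)) ((p : ℕ) - 2) (fun _ => (1 : ℚ))]
  rw [if_pos (Finset.mem_range.mpr (by omega))]

lemma trace_zpow (p : ℕ+) (hp : (p : ℕ).Prime) {K : Type*} [Field K] [NumberField K]
    [IsCyclotomicExtension {(p : ℕ)} ℚ K] {ζ : K} (hζ : IsPrimitiveRoot ζ p) (k : ℤ) :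
    Algebra.trace ℚ K (ζ ^ k) = if ((p : ℕ) : ℤ) ∣ k then ((p : ℕ) : ℚ) - 1 else -1 := by
  haveI : Fact (p : ℕ).Prime := ⟨hp⟩
  have hp2 := hp.two_le
  have hζ0 : ζ ≠ 0 := hζ.ne_zero (by positivity)
  have hPpos : (0 : ℤ) < ((p : ℕ) : ℤ) := by positivity
  have hred : ζ ^ k = ζ ^ (k % ((p : ℕ) : ℤ)).toNat := by
    conv_lhs => rw [← Int.emod_add_mul_ediv k ((p : ℕ) : ℤ)]
    rw [zpow_add₀ hζ0, zpow_mul, zpow_natCast, hζ.pow_eq_one, one_zpow, mul_one,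
      ← zpow_natCast, Int.toNat_of_nonneg (Int.emod_nonneg k hPpos.ne')]
  set r : ℕ := (k % ((p : ℕ) : ℤ)).toNat with hr
  have hrlt : r < (p : ℕ) := by
    have := Int.emod_lt_of_pos k hPpos
    omega
  by_cases hdvd : ((p : ℕ) : ℤ) ∣ k
  · have hr0 : r = 0 := by
      have : k % ((p : ℕ) : ℤ) = 0 := Int.emod_eq_zero_of_dvd hdvd
      omega
    rw [hred, hr0, pow_zero, if_pos hdvd]
    have h1 := Algebra.trace_algebraMap (R := ℚ) (S := K) 1
    rw [map_one] at h1
    rw [h1, IsCyclotomicExtension.finrank K (cyclotomic.irreducible_rat p.pos),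
      Nat.totient_prime hp]
    have h3 : (1:ℕ) ≤ (p:ℕ) := by omega
    simp only [smul_eq_mul, mul_one, nsmul_eq_mul]
    push_cast [Nat.cast_sub h3]
    ring
  · have hr0 : r ≠ 0 := by
      intro hc
      apply hdvd
      apply Int.dvd_of_emod_eq_zero
      omega
    have hcop : r.Coprime (p : ℕ) :=
      Nat.Coprime.symm (hp.coprime_iff_not_dvd.mpr (fun hdd =>
        hr0 (Nat.eq_zero_of_dvd_of_lt hdd hrlt)))
    rw [hred, if_neg hdvd]
    exact trace_primRoot p hp (hζ.pow_of_coprime r hcop)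

end AuxForStmt6

/-- Let `p` be an odd prime, `K = ℚ(ζ_p)` the `p`-th cyclotomic field,
and `Λ` the fractional ideal of `K` generated by `(1 - ζ_p)^{-(p-3)/2}`. Then the lattice
`(Λ, Tr)` with bilinear form `(x, y) ↦ Tr_{K/ℚ}(x·ȳ)` — where complex conjugation `ȳ`
is the automorphism `σ` with `σ(ζ_p) = ζ_p⁻¹` — is a root lattice of type `A_{p-1}`:
`Λ` has a `ℤ`-basis `(e_1, …, e_{p-1})` with `⟨e_i, e_i⟩ = 2`, `⟨e_i, e_j⟩ = -1` if
`|i - j| = 1`, and `⟨e_i, e_j⟩ = 0` otherwise. -/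
theorem stmt6 (p : ℕ+) (hp : (p : ℕ).Prime) (hodd : Odd (p : ℕ))
    (K : Type*) [Field K] [NumberField K] [IsCyclotomicExtension {(p : ℕ)} ℚ K]
    (ζ : K) (hζ : IsPrimitiveRoot ζ p)
    (σ : K ≃ₐ[ℚ] K) (hσ : σ ζ = ζ⁻¹) :
    ∃ b : Module.Basis (Fin ((p : ℕ) - 1)) ℤ
        (Submodule.restrictScalars ℤ
          ((FractionalIdeal.spanSingleton (𝓞 K)⁰
              ((1 - ζ) ^ (-((((p : ℕ) - 3) / 2 : ℕ) : ℤ))) : FractionalIdeal (𝓞 K)⁰ K) :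
            Submodule (𝓞 K) K)),
      ∀ i j, Algebra.trace ℚ K ((b i : K) * σ (b j : K)) =
        if i = j then 2
        else if i.val + 1 = j.val ∨ j.val + 1 = i.val then -1
        else 0 := by
  classical
  haveI : Fact (p : ℕ).Prime := ⟨hp⟩
  haveI : NeZero (p : ℕ) := ⟨hp.pos.ne'⟩
  obtain ⟨w, hw⟩ := hodd
  have hP3 : 3 ≤ (p : ℕ) := by have := hp.two_le; omega
  set m : ℕ := ((p : ℕ) - 3) / 2 with hm
  set h2 : ℕ := ((p : ℕ) - 1) / 2 with hh2
  have hm1 : m + 1 = h2 := by omega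
  have hhh : h2 + h2 = (p : ℕ) - 1 := by omega
  have hζp : ζ ^ (p : ℕ) = 1 := hζ.pow_eq_one
  have hζ0 : ζ ≠ 0 := hζ.ne_zero (by positivity)
  have hζ1 : ζ ≠ 1 := by
    have := hζ.pow_ne_one_of_pos_of_lt (l := 1) one_ne_zero (by omega)
    simpa using this
  have hL0 : (1 : K) - ζ ≠ 0 := sub_ne_zero.mpr (Ne.symm hζ1)
  have hLbar0 : (1 : K) - ζ⁻¹ ≠ 0 := by
    rw [sub_ne_zero]
    intro hcon
    exact hζ1 (by rw [← inv_inv ζ, ← hcon, inv_one])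
  have hσζn : ∀ n : ℕ, σ (ζ ^ n) = (ζ ^ n)⁻¹ := fun n => by rw [map_pow, hσ, inv_pow]
  -- the product π and its properties
  set π : K := ∏ t ∈ Finset.range h2, (1 - ζ ^ (t + 1)) with hπdef
  have hπ0 : π ≠ 0 := by
    rw [hπdef]
    refine Finset.prod_ne_zero_iff.mpr fun t ht => ?_
    rw [Finset.mem_range] at ht
    rw [sub_ne_zero]
    exact fun hcon => hζ.pow_ne_one_of_pos_of_lt (Nat.succ_ne_zero t) (by omega) hcon.symm
  have hσπ0 : σ π ≠ 0 := fun hc => hπ0 (σ.injective (by rw [hc, map_zero]))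
  have hππ : π * σ π = ((p : ℕ) : K) := by
    have hprodp : ∏ t ∈ Finset.range ((p : ℕ) - 1), ((1 : K) - ζ ^ (t + 1)) = ((p : ℕ) : K) := by
      have hζ' : IsPrimitiveRoot ζ (((p : ℕ) - 1) + 1) := by
        rwa [Nat.sub_add_cancel (by omega)]
      rw [hζ'.prod_one_sub_pow_eq_order]
      have h1 : (1 : ℕ) ≤ (p : ℕ) := by omega
      push_cast [Nat.cast_sub h1]
      ring
    have hσπval : σ π = ∏ t ∈ Finset.range h2, ((1 : K) - ζ ^ (h2 + t + 1)) := by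
      rw [hπdef, map_prod,
        ← Finset.prod_range_reflect (fun t => (1 : K) - ζ ^ (h2 + t + 1)) h2]
      refine Finset.prod_congr rfl fun t ht => ?_
      rw [Finset.mem_range] at ht
      rw [map_sub, map_one, hσζn]
      congr 1
      have he : h2 + (h2 - 1 - t) + 1 = (p : ℕ) - (t + 1) := by omega
      rw [he]
      have hmul : ζ ^ (t + 1) * ζ ^ ((p : ℕ) - (t + 1)) = 1 := by
        rw [← pow_add, show (t + 1) + ((p : ℕ) - (t + 1)) = (p : ℕ) by omega, hζp]
      exact inv_eq_of_mul_eq_one_right hmul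
    rw [hσπval, hπdef,
      ← Finset.prod_range_add (fun t => (1 : K) - ζ ^ (t + 1)) h2 h2, hhh, hprodp]
  -- the units a and bb
  set θ : 𝓞 K := hζ.toInteger with hθdef
  have hθζ : algebraMap (𝓞 K) K θ = ζ := rfl
  set c : ℕ → ℕ := fun t => (((t + 1 : ℕ) : ZMod (p : ℕ)))⁻¹.val with hcdef
  have hzc : ∀ t, t < h2 → ζ ^ ((t + 1) * c t) = ζ := by
    intro t ht
    have hne : ((t + 1 : ℕ) : ZMod (p : ℕ)) ≠ 0 := by
      intro hcon
      rw [ZMod.natCast_eq_zero_iff] at hcon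
      have := Nat.le_of_dvd t.succ_pos hcon
      omega
    have hmod : (t + 1) * c t ≡ 1 [MOD (p : ℕ)] := by
      have hcast : (((t + 1) * c t : ℕ) : ZMod (p : ℕ)) = ((1 : ℕ) : ZMod (p : ℕ)) := by
        push_cast
        simp only [hcdef]
        rw [ZMod.natCast_val, ZMod.cast_id,
          show ((t : ZMod (p : ℕ)) + 1) = ((t + 1 : ℕ) : ZMod (p : ℕ)) by push_cast; ring,
          mul_inv_cancel₀ hne]
      exact (ZMod.natCast_eq_natCast_iff _ _ _).mp hcast
    have h1lt : 1 % (p : ℕ) = 1 := Nat.mod_eq_of_lt (by omega)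
    conv_lhs => rw [← Nat.div_add_mod ((t + 1) * c t) (p : ℕ)]
    rw [pow_add, pow_mul, hζp, one_pow, one_mul, Nat.ModEq] at *
    rw [hmod, h1lt, pow_one]
  set a : 𝓞 K := ∏ t ∈ Finset.range h2, ∑ s ∈ Finset.range (c t), θ ^ ((t + 1) * s) with hadef
  set bb : 𝓞 K := ∏ t ∈ Finset.range h2, ∑ s ∈ Finset.range (t + 1), θ ^ s with hbbdef
  have haK : algebraMap (𝓞 K) K a * π = (1 - ζ) ^ h2 := by
    rw [hadef, map_prod, hπdef, ← Finset.prod_mul_distrib,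
      show ((1 : K) - ζ) ^ h2 = ∏ _t ∈ Finset.range h2, ((1 : K) - ζ) by
        rw [Finset.prod_const, Finset.card_range]]
    refine Finset.prod_congr rfl fun t ht => ?_
    rw [Finset.mem_range] at ht
    have hsum : (algebraMap (𝓞 K) K) (∑ s ∈ Finset.range (c t), θ ^ ((t + 1) * s))
        = ∑ s ∈ Finset.range (c t), (ζ ^ (t + 1)) ^ s := by
      rw [map_sum]
      exact Finset.sum_congr rfl fun s _ => by rw [map_pow, hθζ, pow_mul]
    rw [hsum]
    have key := geom_sum_mul (ζ ^ (t + 1)) (c t)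
    have hre : (∑ s ∈ Finset.range (c t), (ζ ^ (t + 1)) ^ s) * (1 - ζ ^ (t + 1))
        = -((∑ s ∈ Finset.range (c t), (ζ ^ (t + 1)) ^ s) * (ζ ^ (t + 1) - 1)) := by ring
    rw [hre, key, ← pow_mul, hzc t ht]
    ring
  have hbK : algebraMap (𝓞 K) K bb * (1 - ζ) ^ h2 = π := by
    rw [hbbdef, map_prod, hπdef,
      show ((1 : K) - ζ) ^ h2 = ∏ _t ∈ Finset.range h2, ((1 : K) - ζ) by
        rw [Finset.prod_const, Finset.card_range],
      ← Finset.prod_mul_distrib]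
    refine Finset.prod_congr rfl fun t ht => ?_
    have hsum : (algebraMap (𝓞 K) K) (∑ s ∈ Finset.range (t + 1), θ ^ s)
        = ∑ s ∈ Finset.range (t + 1), ζ ^ s := by
      rw [map_sum]
      exact Finset.sum_congr rfl fun s _ => by rw [map_pow, hθζ]
    rw [hsum]
    have key := geom_sum_mul ζ (t + 1)
    have hre : (∑ s ∈ Finset.range (t + 1), ζ ^ s) * (1 - ζ)
        = -((∑ s ∈ Finset.range (t + 1), ζ ^ s) * (ζ - 1)) := by ring
    rw [hre, key]
    ring
  have ha0 : algebraMap (𝓞 K) K a ≠ 0 := by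
    intro hcon
    rw [hcon, zero_mul] at haK
    exact pow_ne_zero h2 hL0 haK.symm
  have hab : a * bb = 1 := by
    apply RingOfIntegers.coe_injective
    have e1 : algebraMap (𝓞 K) K (a * bb) * ((1 - ζ) ^ h2 * π)
        = 1 * ((1 - ζ) ^ h2 * π) := by
      rw [map_mul, one_mul]
      calc algebraMap (𝓞 K) K a * algebraMap (𝓞 K) K bb * ((1 - ζ) ^ h2 * π)
          = (algebraMap (𝓞 K) K a * π) * (algebraMap (𝓞 K) K bb * (1 - ζ) ^ h2) := by ring
        _ = (1 - ζ) ^ h2 * π := by rw [haK, hbK]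
    have := mul_right_cancel₀ (mul_ne_zero (pow_ne_zero _ hL0) hπ0) e1
    simpa using this
  -- the element x
  set x : K := (1 - ζ) ^ (-(m : ℤ)) with hxdef
  have hxval : x = ((1 - ζ) ^ m)⁻¹ := by rw [hxdef, zpow_neg, zpow_natCast]
  have hx0 : x ≠ 0 := by rw [hxval]; exact inv_ne_zero (pow_ne_zero _ hL0)
  -- the submodule
  set I : FractionalIdeal (𝓞 K)⁰ K := FractionalIdeal.spanSingleton (𝓞 K)⁰ x with hIdef
  set M : Submodule ℤ K := Submodule.restrictScalars ℤ (I : Submodule (𝓞 K) K) with hMdef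
  have hmem : ∀ cK : 𝓞 K, algebraMap (𝓞 K) K cK * x ∈ M := by
    intro cK
    rw [hMdef, Submodule.restrictScalars_mem, FractionalIdeal.mem_coe]
    exact (FractionalIdeal.mem_spanSingleton _).mpr ⟨cK, (Algebra.smul_def cK x).symm⟩
  set F : 𝓞 K →ₗ[ℤ] M :=
    { toFun := fun cK => ⟨algebraMap (𝓞 K) K (a * cK) * x, hmem _⟩
      map_add' := fun cc d => by
        apply Subtype.ext
        simp [mul_add, add_mul]
      map_smul' := fun n cc => by
        apply Subtype.ext
        push_cast
        simp only [map_mul, map_zsmul, smul_eq_mul, zsmul_eq_mul, RingHom.id_apply, id]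
        ring } with hFdef
  have hFapp : ∀ cK : 𝓞 K, (F cK : K) = algebraMap (𝓞 K) K (a * cK) * x := fun _ => rfl
  have hFinj : Function.Injective F := by
    intro cc d hcd
    have h1 : algebraMap (𝓞 K) K (a * cc) * x = algebraMap (𝓞 K) K (a * d) * x :=
      congrArg Subtype.val hcd
    have h2' : (a * cc : 𝓞 K) = a * d :=
      RingOfIntegers.coe_injective (mul_right_cancel₀ hx0 h1)
    have ha0' : a ≠ 0 := fun hc => ha0 (by rw [hc, map_zero])
    exact mul_left_cancel₀ ha0' h2'
  have hFsurj : Function.Surjective F := by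
    rintro ⟨z, hz⟩
    rw [hMdef, Submodule.restrictScalars_mem, FractionalIdeal.mem_coe] at hz
    obtain ⟨v, hv⟩ := (FractionalIdeal.mem_spanSingleton _).mp hz
    refine ⟨bb * v, Subtype.ext ?_⟩
    show algebraMap (𝓞 K) K (a * (bb * v)) * x = z
    rw [show a * (bb * v) = (a * bb) * v by ring, hab, one_mul, ← Algebra.smul_def, hv]
  set ℓ : 𝓞 K ≃ₗ[ℤ] M := LinearEquiv.ofBijective F ⟨hFinj, hFsurj⟩ with hldef
  set pb := hζ.integralPowerBasis with hpb
  have hdim : pb.dim = (p : ℕ) - 1 := by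
    rw [hpb, hζ.integralPowerBasis_dim, Nat.totient_prime hp]
  refine ⟨(pb.basis.map ℓ).reindex (finCongr hdim), ?_⟩
  have hcoe : ∀ i : Fin ((p : ℕ) - 1),
      ((((pb.basis.map ℓ).reindex (finCongr hdim)) i : M) : K)
        = algebraMap (𝓞 K) K a * ζ ^ (i : ℕ) * x := by
    intro i
    rw [Module.Basis.reindex_apply, Module.Basis.map_apply, PowerBasis.basis_eq_pow]
    have : (ℓ (pb.gen ^ ((finCongr hdim).symm i : ℕ)) : K)
        = algebraMap (𝓞 K) K (a * pb.gen ^ ((finCongr hdim).symm i : ℕ)) * x := rfl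
    have hgen : algebraMap (𝓞 K) K pb.gen = ζ := by
      have hg : pb.gen = θ := hζ.integralPowerBasis_gen
      rw [hg, hθζ]
    rw [this, map_mul, map_pow, hgen]
    congr 2
  have hAval : algebraMap (𝓞 K) K a = (1 - ζ) ^ h2 / π := by
    rw [eq_div_iff hπ0]; exact haK
  have hσA : σ (algebraMap (𝓞 K) K a) = (1 - ζ⁻¹) ^ h2 / σ π := by
    have hc := congrArg σ hAval
    rwa [map_div₀, map_pow, map_sub, map_one, hσ] at hc
  have hσx : σ x = ((1 - ζ⁻¹) ^ m)⁻¹ := by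
    rw [hxval, map_inv₀, map_pow, map_sub, map_one, hσ]
  have hkey : ∀ i j : Fin ((p : ℕ) - 1),
      ((p : ℕ) : K) * ((algebraMap (𝓞 K) K a * ζ ^ (i : ℕ) * x)
          * σ (algebraMap (𝓞 K) K a * ζ ^ (j : ℕ) * x))
      = 2 * ζ ^ (((i : ℕ) : ℤ) - ((j : ℕ) : ℤ))
        - ζ ^ ((((i : ℕ) : ℤ) - ((j : ℕ) : ℤ)) + 1)
        - ζ ^ ((((i : ℕ) : ℤ) - ((j : ℕ) : ℤ)) - 1) := by
    intro i j
    have e0 : ζ ^ (((i : ℕ) : ℤ) - ((j : ℕ) : ℤ)) = ζ ^ (i : ℕ) / ζ ^ (j : ℕ) := by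
      rw [zpow_sub₀ hζ0, zpow_natCast, zpow_natCast]
    have e1 : ζ ^ ((((i : ℕ) : ℤ) - ((j : ℕ) : ℤ)) + 1) = ζ ^ (i : ℕ) / ζ ^ (j : ℕ) * ζ := by
      rw [zpow_add_one₀ hζ0, e0]
    have e2 : ζ ^ ((((i : ℕ) : ℤ) - ((j : ℕ) : ℤ)) - 1) = ζ ^ (i : ℕ) / ζ ^ (j : ℕ) * ζ⁻¹ := by
      rw [zpow_sub_one₀ hζ0, e0]
    have hζj0 : ζ ^ (j : ℕ) ≠ 0 := pow_ne_zero _ hζ0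
    have hyi : ∀ i : Fin ((p : ℕ) - 1),
        algebraMap (𝓞 K) K a * ζ ^ (i : ℕ) * x = ζ ^ (i : ℕ) * (1 - ζ) / π := by
      intro i'
      rw [hAval, hxval, show h2 = m + 1 from hm1.symm, pow_succ]
      have hLm0 : ((1 : K) - ζ) ^ m ≠ 0 := pow_ne_zero _ hL0
      field_simp
    have hσyj : σ (algebraMap (𝓞 K) K a * ζ ^ (j : ℕ) * x)
        = (ζ ^ (j : ℕ))⁻¹ * (1 - ζ⁻¹) / σ π := by
      rw [hyi j, map_div₀, map_mul, map_sub, map_one, hσζn, hσ]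
    rw [hyi i, hσyj, e0, e1, e2, ← hππ]
    have hmid : π * σ π * (ζ ^ (i : ℕ) * (1 - ζ) / π * ((ζ ^ (j : ℕ))⁻¹ * (1 - ζ⁻¹) / σ π))
        = ζ ^ (i : ℕ) * (ζ ^ (j : ℕ))⁻¹ * ((1 - ζ) * (1 - ζ⁻¹)) := by
      field_simp
    rw [hmid]
    field_simp
    ring
  have hTr : ∀ i j : Fin ((p : ℕ) - 1),
      ((p : ℕ) : ℚ) * Algebra.trace ℚ K ((algebraMap (𝓞 K) K a * ζ ^ (i : ℕ) * x)
          * σ (algebraMap (𝓞 K) K a * ζ ^ (j : ℕ) * x))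
      = 2 * Algebra.trace ℚ K (ζ ^ (((i : ℕ) : ℤ) - ((j : ℕ) : ℤ)))
        - Algebra.trace ℚ K (ζ ^ ((((i : ℕ) : ℤ) - ((j : ℕ) : ℤ)) + 1))
        - Algebra.trace ℚ K (ζ ^ ((((i : ℕ) : ℤ) - ((j : ℕ) : ℤ)) - 1)) := by
    intro i j
    have hsmulP : ∀ u : K, Algebra.trace ℚ K (((p : ℕ) : K) * u)
        = ((p : ℕ) : ℚ) * Algebra.trace ℚ K u := by
      intro u
      rw [show (((p : ℕ) : K)) = algebraMap ℚ K ((p : ℕ) : ℚ) by rw [map_natCast],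
        ← Algebra.smul_def, map_smul, smul_eq_mul]
    have hsmul2 : ∀ u : K, Algebra.trace ℚ K ((2 : K) * u)
        = 2 * Algebra.trace ℚ K u := by
      intro u
      rw [show ((2 : K)) = algebraMap ℚ K (2 : ℚ) by rw [map_ofNat],
        ← Algebra.smul_def, map_smul, smul_eq_mul]
    rw [← hsmulP, hkey i j, map_sub, map_sub, hsmul2]
  have hndvd : ∀ k : ℤ, k ≠ 0 → k.natAbs < (p : ℕ) → ¬ (((p : ℕ) : ℤ) ∣ k) := by
    intro k hk hlt hdvd
    apply hk
    refine Int.eq_zero_of_dvd_of_natAbs_lt_natAbs hdvd ?_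
    rwa [Int.natAbs_natCast]
  have hPQ : ((p : ℕ) : ℚ) ≠ 0 := by positivity
  intro i j
  rw [hcoe i, hcoe j]
  have hTrij := hTr i j
  rw [trace_zpow p hp hζ, trace_zpow p hp hζ, trace_zpow p hp hζ] at hTrij
  have hiv : (i : ℕ) < (p : ℕ) - 1 := i.isLt
  have hjv : (j : ℕ) < (p : ℕ) - 1 := j.isLt
  by_cases hij : i = j
  · subst hij
    rw [if_pos rfl]
    rw [show (((i : ℕ) : ℤ) - ((i : ℕ) : ℤ)) = 0 by ring] at hTrij
    rw [if_pos (dvd_zero _),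
      if_neg (by rw [zero_add]; exact hndvd 1 one_ne_zero (by omega)),
      if_neg (by rw [zero_sub]; exact hndvd (-1) (by norm_num) (by omega))] at hTrij
    apply mul_left_cancel₀ hPQ
    rw [hTrij]
    ring
  · rw [if_neg hij]
    have hvij : (i : ℕ) ≠ (j : ℕ) := fun hc => hij (Fin.ext hc)
    by_cases hadj : (i : ℕ) + 1 = (j : ℕ) ∨ (j : ℕ) + 1 = (i : ℕ)
    · rw [if_pos hadj]
      rcases hadj with hc1 | hc1
      · rw [show (((i : ℕ) : ℤ) - ((j : ℕ) : ℤ)) = -1 by omega] at hTrij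
        rw [show ((-1 : ℤ) + 1) = 0 by ring, show ((-1 : ℤ) - 1) = -2 by ring] at hTrij
        rw [if_neg (hndvd (-1) (by norm_num) (by omega)),
          if_pos (dvd_zero _),
          if_neg (hndvd (-2) (by norm_num) (by omega))] at hTrij
        apply mul_left_cancel₀ hPQ
        rw [hTrij]
        ring
      · rw [show (((i : ℕ) : ℤ) - ((j : ℕ) : ℤ)) = 1 by omega] at hTrij
        rw [show ((1 : ℤ) + 1) = 2 by ring, show ((1 : ℤ) - 1) = 0 by ring] at hTrij
        rw [if_neg (hndvd 1 one_ne_zero (by omega)),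
          if_pos (dvd_zero _),
          if_neg (hndvd 2 (by norm_num) (by omega))] at hTrij
        apply mul_left_cancel₀ hPQ
        rw [hTrij]
        ring
    · rw [if_neg hadj]
      push_neg at hadj
      obtain ⟨hna, hnb⟩ := hadj
      rw [if_neg (hndvd _ (by omega) (by omega)),
        if_neg (hndvd _ (by omega) (by omega)),
        if_neg (hndvd _ (by omega) (by omega))] at hTrij
      apply mul_left_cancel₀ hPQ
      rw [hTrij]
      ring
end

section
/- Let k be a field containing no primitive third root of unity and let K/k be a cyclic cubic extension. Then there exists t ∈ k such that K ≅ k[x]/(f_t(x)) where f_t(x) = x³ − t x² − (t+3)x − 1; i.e., K is generated over k by a root of some Shanks polynomial. -/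
/-- Let `k` be a field containing no primitive third root of unity and
`K/k` a cyclic cubic extension. Then there exists `t ∈ k` such that
`K ≅ k[x]/(f_t(x))` with `f_t(x) = x³ − t x² − (t+3) x − 1`; that is, `K` is generated
over `k` by a root of some Shanks polynomial. -/
theorem stmt15 (k K : Type*) [Field k] [Field K] [Algebra k K]
    (hno : ∀ ω : k, ¬ IsPrimitiveRoot ω 3)
    [IsGalois k K] (hcyc : IsCyclic (K ≃ₐ[k] K))
    (hdeg : Module.finrank k K = 3) :
    ∃ (t : k) (u : K),
      u ^ 3 - algebraMap k K t * u ^ 2 - algebraMap k K (t + 3) * u - 1 = 0 ∧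
      Algebra.adjoin k {u} = ⊤ := by
  have hfin : FiniteDimensional k K := Module.finite_of_finrank_pos (by omega)
  obtain ⟨g, hg⟩ := hcyc.exists_generator
  have hcard : Fintype.card (K ≃ₐ[k] K) = 3 := by
    rw [← Nat.card_eq_fintype_card, IsGalois.card_aut_eq_finrank, hdeg]
  have horder : orderOf g = 3 := by
    rw [orderOf_eq_card_of_forall_mem_zpowers hg, Nat.card_eq_fintype_card, hcard]
  have hgpow : g ^ 3 = 1 := by rw [← horder]; exact pow_orderOf_eq_one g
  have hg3 : ∀ x : K, g (g (g x)) = x := by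
    intro x
    have h1 : g * (g * g) = 1 := by
      have := hgpow
      rwa [pow_succ, pow_succ, pow_one, mul_assoc] at this
    have := congrArg (fun f : K ≃ₐ[k] K => f x) h1
    simpa [AlgEquiv.mul_apply] using this
  -- an element fixed by g is fixed by every automorphism
  have hfixall : ∀ x : K, g x = x → ∀ f : K ≃ₐ[k] K, f x = x := by
    intro x hx f
    have hmem : g ∈ MulAction.stabilizer (K ≃ₐ[k] K) x := hx
    have hle : Subgroup.zpowers g ≤ MulAction.stabilizer (K ≃ₐ[k] K) x :=
      Subgroup.zpowers_le.mpr hmem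
    exact hle (hg f)
  have hfixfield : IntermediateField.fixedField (⊤ : Subgroup (K ≃ₐ[k] K)) = ⊥ :=
    ((IsGalois.tfae).out 0 1).mp (inferInstance : IsGalois k K)
  -- an element fixed by g lies in the image of k
  have hbot : ∀ x : K, g x = x → ∃ c : k, algebraMap k K c = x := by
    intro x hx
    have hmem : x ∈ IntermediateField.fixedField (⊤ : Subgroup (K ≃ₐ[k] K)) := by
      intro f
      exact hfixall x hx f
    rw [hfixfield, IntermediateField.mem_bot] at hmem
    exact hmem
  -- the "trace-like" map
  set T : K →ₗ[k] K := LinearMap.id + g.toLinearMap + g.toLinearMap ∘ₗ g.toLinearMap with hT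
  have hTapp : ∀ x : K, T x = x + g x + g (g x) := by
    intro x; simp [hT]
  have hspan : ∀ x : K, (∃ c : k, algebraMap k K c = x) ↔ x ∈ Submodule.span k {(1 : K)} := by
    intro x
    rw [Submodule.mem_span_singleton]
    exact exists_congr fun c => by rw [Algebra.algebraMap_eq_smul_one]
  have hrange : LinearMap.range T ≤ Submodule.span k {(1 : K)} := by
    rintro y ⟨x, rfl⟩
    rw [← hspan]
    apply hbot
    rw [hTapp]
    simp only [map_add]
    rw [hg3]
    ring
  have hspan1 : Module.finrank k (Submodule.span k {(1 : K)}) = 1 :=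
    finrank_span_singleton one_ne_zero
  have hrk : Module.finrank k (LinearMap.range T) ≤ 1 := by
    have := Submodule.finrank_mono hrange
    omega
  have hker : 2 ≤ Module.finrank k (LinearMap.ker T) := by
    have := LinearMap.finrank_range_add_finrank_ker T
    rw [hdeg] at this
    omega
  have hnle : ¬ (LinearMap.ker T ≤ Submodule.span k {(1 : K)}) := by
    intro h
    have := Submodule.finrank_mono h
    omega
  obtain ⟨α, hαker, hαspan⟩ := SetLike.not_le_iff_exists.mp hnle
  have hsum : α + g α + g (g α) = 0 := by
    have := hαker
    rw [LinearMap.mem_ker, hTapp] at this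
    exact this
  have hα0 : α ≠ 0 := by
    rintro rfl
    exact hαspan (Submodule.zero_mem _)
  have hαnk : ¬ ∃ c : k, algebraMap k K c = α := by
    rw [hspan]; exact hαspan
  set a := α with ha'
  set b := g α with hb'
  set c := g (g α) with hc'
  have hb0 : b ≠ 0 := fun h => hα0 (by simpa [hb'] using (map_eq_zero_iff g g.injective).mp h)
  have hc0 : c ≠ 0 := fun h => by
    apply hα0
    have := (map_eq_zero_iff g g.injective).mp ((map_eq_zero_iff g g.injective).mp h)
    exact this
  have hgc : g c = a := hg3 α
  set u := b / a with hu
  have hgu : g u = c / b := by rw [hu, map_div₀]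
  have hggu : g (g u) = a / c := by rw [hgu, map_div₀, hgc]
  -- s is fixed by g
  set s := u + g u + g (g u) with hs
  have hgs : g s = s := by
    rw [hs]
    simp only [map_add]
    rw [hg3 u]
    ring
  obtain ⟨t, ht⟩ := hbot s hgs
  have hsval : s = b / a + c / b + a / c := by rw [hs, hggu, hgu]
  -- u is not in k
  have hune1 : u ≠ 1 := by
    intro h
    apply hαnk
    apply hbot
    have : b = a := by
      rw [hu, div_eq_one_iff_eq hα0] at h
      exact h
    exact this
  have hunk : ¬ ∃ d : k, algebraMap k K d = u := by
    rintro ⟨d, hd⟩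
    have hgu' : g u = u := by rw [← hd, AlgEquiv.commutes]
    have hggu' : g (g u) = u := by rw [hgu', hgu']
    have hu3 : u ^ 3 = 1 := by
      have : u * g u * g (g u) = 1 := by
        rw [hggu, hgu]
        field_simp [hu]
        rw [hu, div_mul_cancel₀ _ hα0]
      rw [hggu', hgu'] at this
      calc u ^ 3 = u * u * u := by ring
        _ = 1 := this
    have hd3 : d ^ 3 = 1 := by
      apply (algebraMap k K).injective
      rw [map_pow, map_one, hd, hu3]
    have hdne1 : d ≠ 1 := by
      rintro rfl
      rw [map_one] at hd
      exact hune1 hd.symm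
    have hord : orderOf d = 3 := by
      have hdvd : orderOf d ∣ 3 := orderOf_dvd_of_pow_eq_one hd3
      have h1 : orderOf d ≠ 1 := fun h => hdne1 (orderOf_eq_one_iff.mp h)
      rcases Nat.prime_three.eq_one_or_self_of_dvd _ hdvd with h | h
      · exact absurd h h1
      · exact h
    exact hno d (hord ▸ IsPrimitiveRoot.orderOf d)
  refine ⟨t, u, ?_, ?_⟩
  · -- the polynomial identity
    have habc : a + b + c = 0 := hsum
    have h3 : algebraMap k K (t + 3) = s + 3 := by
      rw [map_add, ht, map_ofNat]
    set v := g u with hv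
    set w := g v with hw
    have hveq : v = c / b := hgu
    have hweq : w = a / c := by rw [hw, hveq, map_div₀, hgc]
    have hgw : g w = u := by rw [hw, hv]; exact hg3 u
    have h1 : 1 + u + u * v = 0 := by
      rw [hu, hveq]
      field_simp
      linear_combination habc
    have h2 : 1 + v + v * w = 0 := by
      have := congrArg g h1
      simpa [map_add, map_mul, map_one, ← hv, ← hw] using this
    have h3' : 1 + w + w * u = 0 := by
      have := congrArg g h2
      simpa [map_add, map_mul, map_one, ← hw, hgw] using this
    have huvw : u * v * w = 1 := by
      rw [hu, hveq, hweq]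
      field_simp
    have hsvw : s = u + v + w := hs
    have hp : u * v + v * w + w * u = -(3 + s) := by
      linear_combination h1 + h2 + h3' + hsvw
    have hfact : u ^ 3 - (u + v + w) * u ^ 2 + (u * v + v * w + w * u) * u - u * v * w = 0 := by
      ring
    rw [ht, h3]
    linear_combination hfact - u ^ 2 * hsvw - u * hp + huvw
  · rcases (Subalgebra.isSimpleOrder_of_finrank_prime k K (hdeg ▸ Nat.prime_three)).eq_bot_or_eq_top (Algebra.adjoin k {u}) with h | h
    · exfalso
      apply hunk
      have : u ∈ Algebra.adjoin k {u} := Algebra.self_mem_adjoin_singleton k u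
      rw [h, Algebra.mem_bot] at this
      obtain ⟨d, hd⟩ := this
      exact ⟨d, hd⟩
    · exact h
end

section
/- Let K/k be a cyclic cubic extension with Galois group generated by σ, and let α ∈ K satisfy Tr_{K/k}(α) = 0 and α ∉ k. Set u = σ(α)/α. Then 1 + u + u·σ(u) = 0, N_{K/k}(u) = 1, and u is a root of the Shanks polynomial f_{Tr_{K/k}(u)}(x) = x³ − Tr(u)x² − (Tr(u)+3)x − 1. -/
/-- Let `K/k` be a cyclic cubic extension with Galois group generated
by `σ`, and let `α ∈ K` satisfy `Tr_{K/k}(α) = 0` and `α ∉ k`. Set `u = σ(α)/α`.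
Then `1 + u + u·σ(u) = 0`, `N_{K/k}(u) = 1`, and `u` is a root of the Shanks polynomial
`f_{Tr(u)}(x) = x³ − Tr(u)·x² − (Tr(u)+3)·x − 1`. -/
theorem stmt16 (k K : Type*) [Field k] [Field K] [Algebra k K]
    [IsGalois k K] (hdeg : Module.finrank k K = 3)
    (σ : K ≃ₐ[k] K) (hσ : ∀ τ : K ≃ₐ[k] K, τ ∈ Subgroup.zpowers σ)
    (α : K) (htr : Algebra.trace k K α = 0) (hα : α ∉ Set.range (algebraMap k K))
    (u : K) (hu : u = σ α / α) :
    1 + u + u * σ u = 0 ∧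
    Algebra.norm k u = 1 ∧
    u ^ 3 - algebraMap k K (Algebra.trace k K u) * u ^ 2
      - algebraMap k K (Algebra.trace k K u + 3) * u - 1 = 0 := by
  have hfd : FiniteDimensional k K := FiniteDimensional.of_finrank_pos (by omega)
  have hcard : Fintype.card (K ≃ₐ[k] K) = 3 := by
    rw [← Nat.card_eq_fintype_card, IsGalois.card_aut_eq_finrank, hdeg]
  have hord : orderOf σ = 3 := by
    rw [orderOf_eq_card_of_forall_mem_zpowers hσ, Nat.card_eq_fintype_card, hcard]
  have hσ3 : σ ^ 3 = 1 := by rw [← hord]; exact pow_orderOf_eq_one σ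
  have hσne : σ ≠ 1 := by
    intro h; rw [h, orderOf_one] at hord; omega
  have hσ2ne : σ ^ 2 ≠ 1 := by
    intro h
    have := orderOf_dvd_of_pow_eq_one h
    rw [hord] at this; omega
  have hσ2σ : σ ^ 2 ≠ σ := by
    intro h
    have : σ ^ 2 * σ⁻¹ = σ * σ⁻¹ := by rw [h]
    simp [pow_two, mul_assoc] at this
    exact hσne this
  classical
  -- enumeration of the Galois group
  have huniv : (Finset.univ : Finset (K ≃ₐ[k] K)) = {1, σ, σ ^ 2} := by
    symm
    apply Finset.eq_univ_of_card
    rw [hcard]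
    rw [Finset.card_insert_of_notMem (by simp [hσne.symm, hσ2ne.symm]),
      Finset.card_insert_of_notMem (by simp [hσ2σ.symm])]
    simp
  have hsum : ∀ x : K, algebraMap k K (Algebra.trace k K x) = x + σ x + σ (σ x) := by
    intro x
    rw [trace_eq_sum_automorphisms, huniv]
    rw [Finset.sum_insert (by simp [hσne.symm, hσ2ne.symm]),
      Finset.sum_insert (by simp [hσ2σ.symm]), Finset.sum_singleton]
    simp [pow_two, add_assoc]
  have hprod : ∀ x : K, algebraMap k K (Algebra.norm k x) = x * σ x * σ (σ x) := by
    intro x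
    rw [Algebra.norm_eq_prod_automorphisms, huniv]
    rw [Finset.prod_insert (by simp [hσne.symm, hσ2ne.symm]),
      Finset.prod_insert (by simp [hσ2σ.symm]), Finset.prod_singleton]
    simp [pow_two, mul_assoc]
  have hα0 : α ≠ 0 := by
    intro h
    exact hα ⟨0, by simp [h]⟩
  have hσα0 : σ α ≠ 0 := by simpa using hα0
  have htrα : α + σ α + σ (σ α) = 0 := by
    rw [← hsum α, htr, map_zero]
  have r1 : 1 + u + u * σ u = 0 := by
    rw [hu, map_div₀]
    field_simp
    linear_combination htrα
  have r2 : 1 + σ u + σ u * σ (σ u) = 0 := by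
    have := congrArg σ r1
    simpa using this
  have hσ3u : σ (σ (σ u)) = u := by
    have := congrArg (fun τ : K ≃ₐ[k] K => τ u) hσ3
    simpa [pow_succ, pow_two] using this
  have r3 : 1 + σ (σ u) + σ (σ u) * u = 0 := by
    have := congrArg σ r2
    rw [map_add, map_add, map_mul, map_one, hσ3u] at this
    simpa using this
  have hnorm1 : u * σ u * σ (σ u) = 1 := by
    linear_combination σ (σ u) * r1 - r3
  refine ⟨r1, ?_, ?_⟩
  · have : algebraMap k K (Algebra.norm k u) = algebraMap k K 1 := by
      rw [hprod, hnorm1, map_one]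
    exact (algebraMap k K).injective this
  · rw [map_add, hsum u]
    have h3 : (algebraMap k K) (3 : k) = 3 := map_ofNat _ 3
    rw [h3]
    linear_combination (σ (σ u) - u) * r1 + (-u) * r2 + (-u - 1) * r3
end

section
/- Let F be the splitting field of the irreducible Shanks polynomial f_t over ℚ with t ≠ 0, ε a root, σ a generator of Gal(F/ℚ). Then (ε, σ(ε), σ²(ε)) is a normal ℚ-basis of F, i.e., ε, σ(ε), σ²(ε) are ℚ-linearly independent. -/
open Polynomial

/-- Let `F` be the splitting field over `ℚ` of the irreducible Shanks
polynomial `f_t(x) = x³ − t x² − (t+3) x − 1` with `t ≠ 0`, `ε` a root, and `σ` a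
generator of `Gal(F/ℚ)` with `σ(ε) = −1/(1+ε)`. Then `(ε, σ(ε), σ²(ε))` is a normal
`ℚ`-basis of `F`: the conjugates `ε, σ(ε), σ²(ε)` are `ℚ`-linearly independent. -/
theorem stmt18 (t : ℚ) (ht : t ≠ 0) (F : Type*) [Field F] [Algebra ℚ F]
    (hirr : Irreducible (X ^ 3 - C t * X ^ 2 - C (t + 3) * X - 1 : ℚ[X]))
    (ε : F) (hε : aeval ε (X ^ 3 - C t * X ^ 2 - C (t + 3) * X - 1 : ℚ[X]) = 0)
    (hgen : Algebra.adjoin ℚ {ε} = ⊤)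
    [IsGalois ℚ F]
    (σ : F ≃ₐ[ℚ] F) (hσgen : ∀ τ : F ≃ₐ[ℚ] F, τ ∈ Subgroup.zpowers σ)
    (hσε : σ ε = -1 / (1 + ε)) :
    LinearIndependent ℚ ![ε, σ ε, σ (σ ε)] := by
  set T : F := algebraMap ℚ F t with hT
  have hmonic : (X ^ 3 - C t * X ^ 2 - C (t + 3) * X - 1 : ℚ[X]).Monic := by
    monicity!
  have hdegP : (X ^ 3 - C t * X ^ 2 - C (t + 3) * X - 1 : ℚ[X]).degree = 3 := by
    compute_degree!
  have hmp : minpoly ℚ ε = (X ^ 3 - C t * X ^ 2 - C (t + 3) * X - 1 : ℚ[X]) :=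
    (minpoly.eq_of_irreducible_of_monic hirr hε hmonic).symm
  have hε'' : ε ^ 3 - T * ε ^ 2 - (T + 3) * ε - 1 = 0 := by
    have h := hε
    simp only [map_sub, map_mul, map_pow, map_add, map_one, aeval_X, aeval_C,
      map_ofNat] at h
    linear_combination h
  have key : ∀ p q r : ℚ,
      algebraMap ℚ F p + algebraMap ℚ F q * ε + algebraMap ℚ F r * ε ^ 2 = 0 →
      p = 0 ∧ q = 0 ∧ r = 0 := by
    intro p q r h
    by_cases hg : (C p + C q * X + C r * X ^ 2 : ℚ[X]) = 0
    · refine ⟨?_, ?_, ?_⟩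
      · simpa using congrArg (fun s => Polynomial.coeff s 0) hg
      · simpa using congrArg (fun s => Polynomial.coeff s 1) hg
      · simpa using congrArg (fun s => Polynomial.coeff s 2) hg
    · exfalso
      have haev : aeval ε (C p + C q * X + C r * X ^ 2 : ℚ[X]) = 0 := by
        simp only [map_add, map_mul, map_pow, aeval_C, aeval_X]
        linear_combination h
      have hle := minpoly.degree_le_of_ne_zero ℚ ε hg haev
      rw [hmp, hdegP] at hle
      have hd2 : (C p + C q * X + C r * X ^ 2 : ℚ[X]).degree ≤ 2 := by
        compute_degree
      have := hle.trans hd2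
      norm_num at this
  have hε0 : ε ≠ 0 := by
    intro h
    apply one_ne_zero (α := F)
    linear_combination -hε'' + (ε ^ 2 - T * ε - (T + 3)) * h
  have h1ε : (1 : F) + ε ≠ 0 := by
    intro h
    apply one_ne_zero (α := F)
    linear_combination hε'' - (ε ^ 2 - (T + 1) * ε - 2) * h
  have hs1 : (1 + ε) * σ ε = -1 := by
    rw [hσε]; field_simp
  have hs1' : (1 + σ ε) * σ (σ ε) = -1 := by
    have := congrArg σ hs1
    simpa only [map_mul, map_add, map_one, map_neg] using this
  have h1s : (1 + ε) * (1 + σ ε) = ε := by linear_combination hs1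
  have hs2 : ε * σ (σ ε) = -(1 + ε) := by
    linear_combination (1 + ε) * hs1' - σ (σ ε) * h1s
  rw [Fintype.linearIndependent_iff]
  intro g hg
  have hsum : algebraMap ℚ F (g 0) * ε + algebraMap ℚ F (g 1) * σ ε
      + algebraMap ℚ F (g 2) * σ (σ ε) = 0 := by
    have h := hg
    simp only [Fin.sum_univ_three, Matrix.cons_val_zero, Matrix.cons_val_one,
      Matrix.head_cons, Matrix.cons_val_two, Matrix.tail_cons,
      Algebra.smul_def] at h
    linear_combination h
  have hE : algebraMap ℚ F (g 0) * ε ^ 2 * (1 + ε) - algebraMap ℚ F (g 1) * ε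
      - algebraMap ℚ F (g 2) * (1 + ε) ^ 2 = 0 := by
    linear_combination ε * (1 + ε) * hsum - algebraMap ℚ F (g 1) * ε * hs1
      - algebraMap ℚ F (g 2) * (1 + ε) * hs2
  have hkeyEq : algebraMap ℚ F (g 0 - g 2)
      + algebraMap ℚ F (g 0 * (t + 3) - g 1 - 2 * g 2) * ε
      + algebraMap ℚ F (g 0 * (t + 1) - g 2) * ε ^ 2 = 0 := by
    simp only [map_sub, map_add, map_mul, map_one, map_ofNat]
    linear_combination hE - algebraMap ℚ F (g 0) * hε''
  obtain ⟨h1, h2, h3⟩ := key _ _ _ hkeyEq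
  have hat : g 0 * t = 0 := by linear_combination h3 - h1
  have ha : g 0 = 0 := by
    rcases mul_eq_zero.mp hat with h | h
    · exact h
    · exact absurd h ht
  have hc : g 2 = 0 := by linarith
  have hb : g 1 = 0 := by
    rw [ha, hc] at h2; linarith
  intro i
  fin_cases i
  · exact ha
  · exact hb
  · exact hc
end
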